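/- arXiv:cs/0207085 — 2 statements merged into one kernel-verified Lean document; each statement's English description precedes it below -/
import Mathlib

section
/- Let (Insert, Retract) be a repair of a database (D, IC). Then there is a three-valued model N of D ∪ IC (viewing each atom of D as a formula) such that Insert = N^⊤ \ D and Retract = N^⊤ ∩ D. Concretely, the valuation N defined by N(p) = ⊤ if p ∈ Insert ∪ Retract, N(p) = t if p ∉ Insert ∪ Retract but p ∈ D, and N(p) = f otherwise, is such a model. -/
/-- Propositional formulas built from atoms using negation, conjunction and disjunction. -/
inductive Fmla (α : Type) : Type where
  | atom : α → Fmla α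
  | neg  : Fmla α → Fmla α
  | conj : Fmla α → Fmla α → Fmla α
  | disj : Fmla α → Fmla α → Fmla α

/-- Two-valued satisfaction; a two-valued valuation is identified with its set of
true atoms `M` (so `M^t = M`, and the minimal Herbrand model `H^D` is `D` itself). -/
def sat2 {α : Type} (M : Set α) : Fmla α → Prop
  | .atom p => p ∈ M
  | .neg φ => ¬ sat2 M φ
  | .conj φ ψ => sat2 M φ ∧ sat2 M ψ
  | .disj φ ψ => sat2 M φ ∨ sat2 M ψ

/-- `M` is a two-valued model of the set of formulas `T`. -/
def models2 {α : Type} (M : Set α) (T : Set (Fmla α)) : Prop := ∀ φ ∈ T, sat2 M φ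

/-- `(D, IC)` is a database: `IC` is a finite, classically consistent set of formulas. -/
def IsDatabase {α : Type} (_D : Set α) (IC : Set (Fmla α)) : Prop :=
  IC.Finite ∧ ∃ M : Set α, models2 M IC

/-- The database `(D, IC)` is consistent: every formula of `IC` follows from `D`,
i.e. is satisfied by the minimal Herbrand model of `D`. -/
def IsConsistentDB {α : Type} (D : Set α) (IC : Set (Fmla α)) : Prop := models2 D IC

/-- `(I, R)` is a repair of the database `(D, IC)`. -/
def IsRepair {α : Type} (D : Set α) (IC : Set (Fmla α)) (I R : Set α) : Prop :=
  I ∩ D = ∅ ∧ R ⊆ D ∧ IsConsistentDB ((D ∪ I) \ R) IC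

/-- The three-valued structure THREE = {t, f, ⊤}. -/
inductive Three : Type where
  | tt | ff | top
  deriving DecidableEq

namespace Three

/-- Position in the truth order `f ≤_t ⊤ ≤_t t`. -/
def rank : Three → ℕ
  | ff => 0 | top => 1 | tt => 2

/-- Conjunction: meet w.r.t. the truth order. -/
def and3 (a b : Three) : Three := if rank a ≤ rank b then a else b

/-- Disjunction: join w.r.t. the truth order. -/
def or3 (a b : Three) : Three := if rank a ≤ rank b then b else a

/-- Negation: swaps `t` and `f`, fixes `⊤`. -/
def neg3 : Three → Three | tt => ff | ff => tt | top => top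

/-- `x ⊕ y`: the least upper bound w.r.t. the knowledge order. -/
def oplus (a b : Three) : Three := if a = b then a else top

/-- The knowledge order `≤_k`: `f` and `t` incomparable, both below `⊤`. -/
def kle (a b : Three) : Prop := a = b ∨ b = top

/-- The designated truth values are `t` and `⊤`. -/
def designated (a : Three) : Prop := a ≠ ff

end Three

/-- Three-valued evaluation of formulas. -/
def eval3 {α : Type} (ν : α → Three) : Fmla α → Three
  | .atom p => ν p
  | .neg φ => Three.neg3 (eval3 ν φ)
  | .conj φ ψ => Three.and3 (eval3 ν φ) (eval3 ν ψ)
  | .disj φ ψ => Three.or3 (eval3 ν φ) (eval3 ν ψ)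

/-- `ν` is a three-valued model of the set of formulas `T`. -/
def models3 {α : Type} (ν : α → Three) (T : Set (Fmla α)) : Prop :=
  ∀ φ ∈ T, Three.designated (eval3 ν φ)

open Classical in
/-- The two-valued valuation with true-set `M`, viewed inside THREE. -/
noncomputable def toThree {α : Type} (M : Set α) (p : α) : Three :=
  if p ∈ M then Three.tt else Three.ff

/-- `ν^⊤`: the atoms assigned `⊤` by `ν`. -/
def topSet {α : Type} (ν : α → Three) : Set α := {p | ν p = Three.top}

/-- `ν ≥_k μ` pointwise. -/
def kge {α : Type} (ν μ : α → Three) : Prop := ∀ p, Three.kle (μ p) (ν p)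

/-- The valuation `H^D ⊕ M` (pointwise `⊕`). -/
noncomputable def herbOplus {α : Type} (D M : Set α) : α → Three :=
  fun p => Three.oplus (toThree D p) (toThree M p)

/-- `M^DB = { N | N ≥_k H^D ⊕ M for some two-valued model M of IC }`. -/
def MDB {α : Type} (D : Set α) (IC : Set (Fmla α)) : Set (α → Three) :=
  {N | ∃ M : Set α, models2 M IC ∧ kge N (herbOplus D M)}

/-- The atoms of `D`, viewed as formulas. -/
def atomsOf {α : Type} (D : Set α) : Set (Fmla α) := Fmla.atom '' D

/-- `(I, R)` is a `≤_i`-preferred repair of `(D, IC)`: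
`(I', R') ≤_i (I, R)` iff `I ⊆ I'` and `R ⊆ R'`. -/
def IsPreferredRepairI {α : Type} (D : Set α) (IC : Set (Fmla α)) (I R : Set α) : Prop :=
  IsRepair D IC I R ∧
    ∀ I' R', IsRepair D IC I' R' → (I' ⊆ I ∧ R' ⊆ R) → (I ⊆ I' ∧ R ⊆ R')

/-- `(I, R)` is a `≤_c`-preferred repair of `(D, IC)`:
`(I', R') ≤_c (I, R)` iff `|I| + |R| ≤ |I'| + |R'|`. -/
def IsPreferredRepairC {α : Type} (D : Set α) (IC : Set (Fmla α)) (I R : Set α) : Prop :=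
  IsRepair D IC I R ∧
    ∀ I' R', IsRepair D IC I' R' → I'.ncard + R'.ncard ≤ I.ncard + R.ncard →
      I.ncard + R.ncard ≤ I'.ncard + R'.ncard

/-- `N` is `≤_i`-maximally consistent in `S`: no `N' ∈ S` has `N'^⊤ ⊊ N^⊤`. -/
def MaxConsI {α : Type} (S : Set (α → Three)) (N : α → Three) : Prop :=
  N ∈ S ∧ ¬ ∃ N' ∈ S, topSet N' ⊂ topSet N

/-- `N` is `≤_c`-maximally consistent in `S`: no `N' ∈ S` has `#(N'^⊤) < #(N^⊤)`. -/
def MaxConsC {α : Type} (S : Set (α → Three)) (N : α → Three) : Prop :=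
  N ∈ S ∧ ¬ ∃ N' ∈ S, (topSet N').ncard < (topSet N).ncard

/-! Write `M = (D ∪ I) \ R` for the repaired database. The prescribed valuation is `H^D ⊕ M`,
whose `⊤`-set is the symmetric difference `D ∆ M = I ∪ R`. Three-valued evaluation is
monotone in the knowledge order and the designated values are upward closed in it, so
`H^D ⊕ M`, lying `≤_k`-above both `H^D` and `M`, satisfies every atom of `D` and, since `M`
is a two-valued model of `IC`, every constraint. -/

namespace Three

theorem kle_refl (a : Three) : kle a a := Or.inl rfl

theorem designated_of_kle {a b : Three} (h : kle a b) (ha : designated a) : designated b := by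
  rcases h with rfl | rfl
  · exact ha
  · exact Three.noConfusion

theorem kle_neg3 {a b : Three} (h : kle a b) : kle (neg3 a) (neg3 b) := by
  rcases h with rfl | rfl
  · exact kle_refl _
  · exact Or.inr rfl

theorem kle_and3 {a a' b b' : Three} (ha : kle a a') (hb : kle b b') :
    kle (and3 a b) (and3 a' b') := by
  rcases ha with rfl | rfl <;> rcases hb with rfl | rfl <;> cases a <;> cases b <;>
    simp [kle, and3, rank]

theorem kle_or3 {a a' b b' : Three} (ha : kle a a') (hb : kle b b') :
    kle (or3 a b) (or3 a' b') := by
  rcases ha with rfl | rfl <;> rcases hb with rfl | rfl <;> cases a <;> cases b <;>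
    simp [kle, or3, rank]

theorem kle_oplus_left (a b : Three) : kle a (oplus a b) := by
  unfold oplus; split_ifs
  · exact kle_refl a
  · exact Or.inr rfl

theorem kle_oplus_right (a b : Three) : kle b (oplus a b) := by
  unfold oplus; split_ifs with h
  · exact h ▸ kle_refl b
  · exact Or.inr rfl

end Three

section Valuations

variable {α : Type}

theorem eval3_kle_of_kge {N μ : α → Three} (h : kge N μ) (φ : Fmla α) :
    Three.kle (eval3 μ φ) (eval3 N φ) := by
  induction φ with
  | atom p => exact h p
  | neg φ ih => exact Three.kle_neg3 ih
  | conj φ ψ ihφ ihψ => exact Three.kle_and3 ihφ ihψ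
  | disj φ ψ ihφ ihψ => exact Three.kle_or3 ihφ ihψ

open Classical in
theorem eval3_toThree (M : Set α) (φ : Fmla α) :
    eval3 (toThree M) φ = if sat2 M φ then Three.tt else Three.ff := by
  induction φ with
  | atom p => rfl
  | neg φ ih =>
    by_cases h : sat2 M φ <;> simp [eval3, sat2, ih, h, Three.neg3]
  | conj φ ψ ihφ ihψ =>
    simp only [eval3, sat2, ihφ, ihψ]
    split_ifs <;> simp_all [Three.and3, Three.rank]
  | disj φ ψ ihφ ihψ =>
    simp only [eval3, sat2, ihφ, ihψ]
    split_ifs <;> simp_all [Three.or3, Three.rank]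

theorem models3_of_kge_toThree {M : Set α} {T : Set (Fmla α)} {N : α → Three}
    (hM : models2 M T) (hN : kge N (toThree M)) : models3 N T := by
  intro φ hφ
  refine Three.designated_of_kle (eval3_kle_of_kge hN φ) ?_
  rw [eval3_toThree, if_pos (hM φ hφ)]
  exact Three.noConfusion

theorem models3_union {N : α → Three} {S T : Set (Fmla α)} (hS : models3 N S)
    (hT : models3 N T) : models3 N (S ∪ T) :=
  fun φ hφ => hφ.elim (hS φ) (hT φ)

theorem models2_atomsOf (D : Set α) : models2 D (atomsOf D) := by
  rintro _ ⟨p, hp, rfl⟩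
  exact hp

theorem kge_herbOplus_left (D M : Set α) : kge (herbOplus D M) (toThree D) :=
  fun _ => Three.kle_oplus_left _ _

theorem kge_herbOplus_right (D M : Set α) : kge (herbOplus D M) (toThree M) :=
  fun _ => Three.kle_oplus_right _ _

theorem models3_herbOplus {D M : Set α} {S T : Set (Fmla α)} (hD : models2 D S)
    (hM : models2 M T) : models3 (herbOplus D M) (S ∪ T) :=
  models3_union (models3_of_kge_toThree hD (kge_herbOplus_left D M))
    (models3_of_kge_toThree hM (kge_herbOplus_right D M))

open Classical in
theorem herbOplus_eq_ite (D M : Set α) :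
    herbOplus D M = fun p => if p ∈ symmDiff D M then Three.top else
      if p ∈ D then Three.tt else Three.ff := by
  funext p
  by_cases hD : p ∈ D <;> by_cases hM : p ∈ M <;>
    simp [herbOplus, toThree, Three.oplus, Set.mem_symmDiff, hD, hM]

theorem topSet_herbOplus (D M : Set α) : topSet (herbOplus D M) = symmDiff D M := by
  ext p
  by_cases hD : p ∈ D <;> by_cases hM : p ∈ M <;>
    simp [topSet, herbOplus, toThree, Three.oplus, Set.mem_symmDiff, hD, hM]

end Valuations

section Repairs

variable {α : Type} {D I R : Set α}

theorem symmDiff_union_diff (hID : I ∩ D = ∅) (hRD : R ⊆ D) :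
    symmDiff D ((D ∪ I) \ R) = I ∪ R := by
  ext p
  have hI : p ∈ I → p ∉ D := fun hpI hpD => (Set.eq_empty_iff_forall_notMem.mp hID) p ⟨hpI, hpD⟩
  have hR : p ∈ R → p ∈ D := @hRD p
  simp only [Set.mem_symmDiff, Set.mem_sdiff, Set.mem_union]
  tauto

theorem union_diff_eq_left (hID : I ∩ D = ∅) (hRD : R ⊆ D) : (I ∪ R) \ D = I := by
  rw [Set.union_sdiff_distrib, Set.sdiff_eq_empty.mpr hRD, Set.union_empty]
  exact (Set.disjoint_iff_inter_eq_empty.mpr hID).sdiff_eq_left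

theorem union_inter_eq_right (hID : I ∩ D = ∅) (hRD : R ⊆ D) : (I ∪ R) ∩ D = R := by
  rw [Set.union_inter_distrib_right, hID, Set.empty_union, Set.inter_eq_left.mpr hRD]

end Repairs

open Classical in
theorem three_valued_model_of_repair_general {α : Type} (D : Set α) (IC : Set (Fmla α))
    (I R : Set α) (h : IsRepair D IC I R) :
    (∃ N : α → Three, models3 N (atomsOf D ∪ IC) ∧
        I = topSet N \ D ∧ R = topSet N ∩ D) ∧
    (models3 (fun p => if p ∈ I ∪ R then Three.top else
        if p ∈ D then Three.tt else Three.ff) (atomsOf D ∪ IC) ∧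
      I = topSet (fun p => if p ∈ I ∪ R then Three.top else
        if p ∈ D then Three.tt else Three.ff) \ D ∧
      R = topSet (fun p => if p ∈ I ∪ R then Three.top else
        if p ∈ D then Three.tt else Three.ff) ∩ D) := by
  obtain ⟨hID, hRD, hcons⟩ := h
  set N : α → Three := fun p => if p ∈ I ∪ R then Three.top else
    if p ∈ D then Three.tt else Three.ff
  have hN : herbOplus D ((D ∪ I) \ R) = N := by
    rw [herbOplus_eq_ite, symmDiff_union_diff hID hRD]
    congr!
  have hmodel : models3 N (atomsOf D ∪ IC) := hN ▸ models3_herbOplus (models2_atomsOf D) hcons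
  have htop : topSet N = I ∪ R := by
    rw [← hN, topSet_herbOplus, symmDiff_union_diff hID hRD]
  have hsets : I = topSet N \ D ∧ R = topSet N ∩ D := by
    rw [htop, union_diff_eq_left hID hRD, union_inter_eq_right hID hRD]
    exact ⟨rfl, rfl⟩
  exact ⟨⟨N, hmodel, hsets⟩, hmodel, hsets⟩

open Classical in
/-- Proposition 4: every repair `(I, R)` of `(D, IC)` arises from a
three-valued model `N` of `D ∪ IC` as `(N^⊤ \ D, N^⊤ ∩ D)`; concretely, the
valuation assigning `⊤` on `I ∪ R`, `t` on the rest of `D` and `f` elsewhere is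
such a model. -/
theorem three_valued_model_of_repair {α : Type} (D : Set α) (IC : Set (Fmla α))
    (hDB : IsDatabase D IC) (I R : Set α) (h : IsRepair D IC I R) :
    (∃ N : α → Three, models3 N (atomsOf D ∪ IC) ∧
        I = topSet N \ D ∧ R = topSet N ∩ D) ∧
    (models3 (fun p => if p ∈ I ∪ R then Three.top else
        if p ∈ D then Three.tt else Three.ff) (atomsOf D ∪ IC) ∧
      I = topSet (fun p => if p ∈ I ∪ R then Three.top else
        if p ∈ D then Three.tt else Three.ff) \ D ∧
      R = topSet (fun p => if p ∈ I ∪ R then Three.top else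
        if p ∈ D then Three.tt else Three.ff) ∩ D) :=
  three_valued_model_of_repair_general D IC I R h
end

section
/- If ν and μ are three-valued valuations with ν(p) ≥_k μ(p) for every atom p, and μ is a three-valued model of a set T of formulas built from atoms using negation, conjunction and disjunction, then ν is also a three-valued model of T. -/
theorem kle_eval3 {α : Type} (ν μ : α → Three)
    (h : ∀ p, Three.kle (μ p) (ν p)) (φ : Fmla α) :
    Three.kle (eval3 μ φ) (eval3 ν φ) := by
  induction φ with
  | atom p => exact h p
  | neg φ ih =>
    simp only [eval3]
    revert ih
    rcases eval3 μ φ <;> rcases eval3 ν φ <;> simp [Three.kle, Three.neg3, Three.and3, Three.or3, Three.rank]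
  | conj φ ψ ihφ ihψ =>
    simp only [eval3]
    revert ihφ ihψ
    rcases eval3 μ φ <;> rcases eval3 ν φ <;> rcases eval3 μ ψ <;> rcases eval3 ν ψ <;> simp [Three.kle, Three.neg3, Three.and3, Three.or3, Three.rank]
  | disj φ ψ ihφ ihψ =>
    simp only [eval3]
    revert ihφ ihψ
    rcases eval3 μ φ <;> rcases eval3 ν φ <;> rcases eval3 μ ψ <;> rcases eval3 ν ψ <;> simp [Three.kle, Three.neg3, Three.and3, Three.or3, Three.rank]

/-- if `ν ≥_k μ` and `μ` is a three-valued model of `T`, then so is `ν`. -/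
theorem models3_of_kge {α : Type} (ν μ : α → Three)
    (h : ∀ p, Three.kle (μ p) (ν p)) (T : Set (Fmla α)) (hμ : models3 μ T) :
    models3 ν T := by
  intro φ hφ
  have := kle_eval3 ν μ h φ
  have hd := hμ φ hφ
  rcases this with he | he
  · rwa [← he]
  · rw [he]; intro c; cases c
end
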